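/- arXiv:1703.07528 — 4 statements merged into one kernel-verified Lean document; each statement's English description precedes it below -/
import Mathlib

section
/- Let v* ∈ ℝ satisfy |v* − v̄| ≤ ε, where v̄ is a fixed point of Υ (i.e. Υ(v̄) = v̄) and ε ≥ 0. Then for every t ∈ {0,…,k} and every x ∈ X, |V(x,t,v*) − V(x,t,v̄)| ≤ ε. (This is the accuracy guarantee of the BiDS algorithm: the functions V(·,t,v*) are uniformly within ε of the optimal value functions J(·,t) = V(·,t,v̄).) -/
/-!
The value functions are nonexpansive in the reset value: `|V x t a - V x t b| ≤ |a - b|`.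
This follows by backward induction on `t`. At `t = k` the value is `v` plus a constant, and a
Bellman step preserves the bound, since `min` and `Finset.inf'` are nonexpansive for the sup
distance and an expectation discounted by `γ ∈ [0, 1]` does not enlarge it.
-/

open Finset

theorem Finset.abs_inf'_sub_inf'_le {ι α : Type*} [AddCommGroup α] [LinearOrder α]
    [IsOrderedAddMonoid α] {s : Finset ι} (H : s.Nonempty) {f g : ι → α} {c : α}
    (hfg : ∀ i ∈ s, |f i - g i| ≤ c) : |s.inf' H f - s.inf' H g| ≤ c := by
  refine abs_sub_le_iff.2 ⟨sub_le_comm.1 (le_inf' H _ fun i hi => ?_),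
    sub_le_comm.1 (le_inf' H _ fun i hi => ?_)⟩
  · exact sub_le_comm.1 <|
      (sub_le_sub_right (inf'_le f hi) _).trans (abs_sub_le_iff.1 (hfg i hi)).1
  · exact sub_le_comm.1 <|
      (sub_le_sub_right (inf'_le g hi) _).trans (abs_sub_le_iff.1 (hfg i hi)).2

section Expectation

variable {W : Type*} [Fintype W] {p : W → ℝ}

theorem abs_sum_weighted_le (hp : ∀ w, 0 ≤ p w) (hp1 : ∑ w, p w = 1) {f : W → ℝ} {c : ℝ}
    (hf : ∀ w, |f w| ≤ c) : |∑ w, p w * f w| ≤ c :=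
  calc |∑ w, p w * f w| ≤ ∑ w, p w * |f w| := by
        simpa only [abs_mul, abs_of_nonneg (hp _)] using
          abs_sum_le_sum_abs (fun w => p w * f w) univ
    _ ≤ ∑ w, p w * c := sum_le_sum fun w _ => mul_le_mul_of_nonneg_left (hf w) (hp w)
    _ = c := by rw [← sum_mul, hp1, one_mul]

theorem abs_sum_weighted_discounted_sub_le (hp : ∀ w, 0 ≤ p w) (hp1 : ∑ w, p w = 1)
    {γ : ℝ} (hγ0 : 0 ≤ γ) (hγ1 : γ ≤ 1) (g F G : W → ℝ) {c : ℝ}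
    (hFG : ∀ w, |F w - G w| ≤ c) :
    |∑ w, p w * (g w + γ * F w) - ∑ w, p w * (g w + γ * G w)| ≤ c := by
  have hdiff : ∑ w, p w * (g w + γ * F w) - ∑ w, p w * (g w + γ * G w)
      = ∑ w, p w * (γ * (F w - G w)) := by
    rw [← sum_sub_distrib]
    exact sum_congr rfl fun w _ => by ring
  rw [hdiff]
  refine abs_sum_weighted_le hp hp1 fun w => ?_
  rw [abs_mul, abs_of_nonneg hγ0]
  exact (mul_le_of_le_one_left (abs_nonneg _) hγ1).trans (hFG w)

end Expectation

theorem abs_value_sub_le_abs_sub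
    {W : Type*} [Fintype W] {p : W → ℝ} (hp : ∀ w, 0 ≤ p w) (hp1 : ∑ w, p w = 1)
    {X U : Type*} [Fintype U] [Nonempty U] {k : ℕ} {γ : ℝ} (hγ0 : 0 ≤ γ) (hγ1 : γ ≤ 1)
    {h : X → ℕ → U → W → X} {g : X → ℕ → U → W → ℝ} {s : X → ℕ → W → ℝ}
    {V : X → ℕ → ℝ → ℝ}
    (hVk : ∀ x v, V x k v = v + ∑ w, p w * s x k w)
    (hVt : ∀ x t v, t < k →
      V x t v = min (v + ∑ w, p w * s x t w)
        (univ.inf' univ_nonempty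
          (fun u : U => ∑ w, p w * (g x t u w + γ * V (h x t u w) (t + 1) v))))
    (a b : ℝ) {t : ℕ} (ht : t ≤ k) (x : X) :
    |V x t a - V x t b| ≤ |a - b| := by
  induction ht using Nat.decreasingInduction generalizing x with
  | self => rw [hVk, hVk, add_sub_add_right_eq_sub]
  | of_succ t ht ih =>
    rw [hVt x t a ht, hVt x t b ht]
    refine (abs_min_sub_min_le_max _ _ _ _).trans (max_le ?_ ?_)
    · rw [add_sub_add_right_eq_sub]
    · exact univ.abs_inf'_sub_inf'_le univ_nonempty fun u _ =>
        abs_sum_weighted_discounted_sub_le hp hp1 hγ0 hγ1 _ _ _ fun w => ih _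

theorem bids_accuracy_general
    {W : Type*} [Fintype W] (p : W → ℝ)
    (hp : ∀ w, 0 ≤ p w) (hp1 : ∑ w, p w = 1)
    {X : Type*}
    {U : Type*} [Fintype U] [Nonempty U]
    (k : ℕ)
    (γ : ℝ) (hγ0 : 0 ≤ γ) (hγ1 : γ < 1)
    (h : X → ℕ → U → W → X)
    (g : X → ℕ → U → W → ℝ)
    (s : X → ℕ → W → ℝ)
    (V : X → ℕ → ℝ → ℝ)
    (hVk : ∀ x v, V x k v = v + ∑ w, p w * s x k w)
    (hVt : ∀ x t v, t < k →
      V x t v = min (v + ∑ w, p w * s x t w)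
        (Finset.univ.inf' Finset.univ_nonempty
          (fun u : U => ∑ w, p w * (g x t u w + γ * V (h x t u w) (t + 1) v))))
    (ε : ℝ)
    (vbar : ℝ)
    (vstar : ℝ) (hclose : |vstar - vbar| ≤ ε) :
    ∀ t ≤ k, ∀ x : X, |V x t vstar - V x t vbar| ≤ ε := fun _ ht x =>
  (abs_value_sub_le_abs_sub hp hp1 hγ0 hγ1.le hVk hVt vstar vbar ht x).trans hclose

/-- **BiDS accuracy guarantee.**  If `v*` satisfies `|v* − v̄| ≤ ε` where `v̄` is a fixed
point of `Υ`, then the backward-recursion value functions `V(·, t, v*)` are uniformly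
within `ε` of the optimal value functions `J(·,t) = V(·, t, v̄)` for all `t ∈ {0,…,k}`. -/
theorem bids_accuracy
    {W : Type*} [Fintype W] [Nonempty W] (p : W → ℝ)
    (hp : ∀ w, 0 ≤ p w) (hp1 : ∑ w, p w = 1)
    {X : Type*} (ζ : X)
    {U : Type*} [Fintype U] [Nonempty U]
    (k : ℕ) (hk : 1 ≤ k)
    (γ : ℝ) (hγ0 : 0 ≤ γ) (hγ1 : γ < 1)
    (h : X → ℕ → U → W → X)
    (g : X → ℕ → U → W → ℝ) (hg : ∀ x t u w, 0 ≤ g x t u w)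
    (s : X → ℕ → W → ℝ) (hs : ∀ x t w, 0 ≤ s x t w)
    (hsζ : ∀ t w, s ζ t w = 0)
    (V : X → ℕ → ℝ → ℝ)
    (hVk : ∀ x v, V x k v = v + ∑ w, p w * s x k w)
    (hVt : ∀ x t v, t < k →
      V x t v = min (v + ∑ w, p w * s x t w)
        (Finset.univ.inf' Finset.univ_nonempty
          (fun u : U => ∑ w, p w * (g x t u w + γ * V (h x t u w) (t + 1) v))))
    (Υ : ℝ → ℝ)
    (hΥ : ∀ v, Υ v = Finset.univ.inf' Finset.univ_nonempty
      (fun u : U => ∑ w, p w * (g ζ 0 u w + γ * V (h ζ 0 u w) 1 v)))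
    (ε : ℝ) (hε : 0 ≤ ε)
    (vbar : ℝ) (hfix : Υ vbar = vbar)
    (vstar : ℝ) (hclose : |vstar - vbar| ≤ ε) :
    ∀ t ≤ k, ∀ x : X, |V x t vstar - V x t vbar| ≤ ε :=
  bids_accuracy_general p hp hp1 k γ hγ0 hγ1 h g s V hVk hVt ε vbar vstar hclose
end

section
/- The map Υ : ℝ → ℝ has exactly one fixed point; that is, there exists a unique v̄ ∈ ℝ with Υ(v̄) = v̄. -/
/-!
Each stage of the backward recursion for `V` takes the minimum of the reset value `v + E[s]` and of
finitely many terms `E[g + γ · V(·, t + 1, v)]`. Probability averages and finite minima preserve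
Lipschitz constants, and the continuation is damped by `γ ≤ 1`, so by backward induction every
`V(x, t, ·)` is `1`-Lipschitz. One more such stage makes `Υ` a `γ`-contraction of `ℝ`, and Banach's
fixed point theorem applies.
-/

open Finset
open scoped NNReal

lemma LipschitzWith.finset_inf' {ι α : Type*} [PseudoEMetricSpace α] {s : Finset ι}
    (hs : s.Nonempty) {f : ι → α → ℝ} {K : ℝ≥0} (hf : ∀ i ∈ s, LipschitzWith K (f i)) :
    LipschitzWith K fun x => s.inf' hs fun i => f i x := by
  induction hs using Finset.Nonempty.cons_induction with
  | singleton i => simpa using hf i (mem_singleton_self i)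
  | cons i s hi hs ih =>
    simp only [inf'_cons hs]
    simpa using (hf i (mem_cons_self i s)).min (ih fun j hj => hf j (mem_cons_of_mem hj))

lemma LipschitzWith.weighted_sum {W α : Type*} [Fintype W] [PseudoMetricSpace α] {p : W → ℝ}
    (hp : ∀ w, 0 ≤ p w) (hp1 : ∑ w, p w = 1) {f : W → α → ℝ} {K : ℝ≥0}
    (hf : ∀ w, LipschitzWith K (f w)) : LipschitzWith K fun x => ∑ w, p w * f w x := by
  refine lipschitzWith_iff_dist_le_mul.2 fun x y => ?_
  calc dist (∑ w, p w * f w x) (∑ w, p w * f w y)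
      = |∑ w, p w * (f w x - f w y)| := by simp only [Real.dist_eq, ← sum_sub_distrib, mul_sub]
    _ ≤ ∑ w, p w * |f w x - f w y| := by
        simpa only [abs_mul, abs_of_nonneg (hp _)] using
          abs_sum_le_sum_abs (fun w => p w * (f w x - f w y)) univ
    _ ≤ ∑ w, p w * (K * dist x y) := by
        gcongr with w
        · exact hp w
        · exact (hf w).dist_le_mul x y
    _ = K * dist x y := by rw [← sum_mul, hp1, one_mul]

lemma LipschitzWith.const_add_mul {α : Type*} [PseudoMetricSpace α] {f : α → ℝ} {K : ℝ≥0}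
    (hf : LipschitzWith K f) {γ : ℝ} (hγ : 0 ≤ γ) (c : ℝ) :
    LipschitzWith (γ.toNNReal * K) fun x => c + γ * f x := by
  refine lipschitzWith_iff_dist_le_mul.2 fun x y => ?_
  rw [Real.dist_eq, add_sub_add_left_eq_sub, ← mul_sub, abs_mul, abs_of_nonneg hγ,
    NNReal.coe_mul, Real.coe_toNNReal γ hγ, mul_assoc, ← Real.dist_eq]
  exact mul_le_mul_of_nonneg_left (hf.dist_le_mul x y) hγ

lemma lipschitzWith_inf'_expected_cost {U W α : Type*} [Fintype U] [Nonempty U] [Fintype W]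
    [PseudoMetricSpace α] {p : W → ℝ} (hp : ∀ w, 0 ≤ p w) (hp1 : ∑ w, p w = 1)
    {γ : ℝ} (hγ : 0 ≤ γ) (c : U → W → ℝ) {f : U → W → α → ℝ} {K : ℝ≥0}
    (hf : ∀ u w, LipschitzWith K (f u w)) :
    LipschitzWith (γ.toNNReal * K) fun x =>
      univ.inf' univ_nonempty fun u => ∑ w, p w * (c u w + γ * f u w x) :=
  LipschitzWith.finset_inf' univ_nonempty fun u _ =>
    LipschitzWith.weighted_sum hp hp1 fun w => (hf u w).const_add_mul hγ (c u w)

lemma lipschitzWith_one_of_finite_horizon_recursion {X U W : Type*} [Fintype U] [Nonempty U]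
    [Fintype W] {p : W → ℝ} (hp : ∀ w, 0 ≤ p w) (hp1 : ∑ w, p w = 1) {γ : ℝ} (hγ0 : 0 ≤ γ)
    (hγ1 : γ ≤ 1) {k : ℕ} {h : X → ℕ → U → W → X} {g : X → ℕ → U → W → ℝ}
    {s : X → ℕ → W → ℝ} {V : X → ℕ → ℝ → ℝ}
    (hVk : ∀ x v, V x k v = v + ∑ w, p w * s x k w)
    (hVt : ∀ x t v, t < k →
      V x t v = min (v + ∑ w, p w * s x t w)
        (univ.inf' univ_nonempty
          (fun u : U => ∑ w, p w * (g x t u w + γ * V (h x t u w) (t + 1) v))))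
    {t : ℕ} (ht : t ≤ k) (x : X) : LipschitzWith 1 (V x t) := by
  induction ht using Nat.decreasingInduction generalizing x with
  | self =>
    rw [funext (hVk x)]
    exact (isometry_add_right _).lipschitz
  | of_succ t ht ih =>
    have hQ := lipschitzWith_inf'_expected_cost hp hp1 hγ0 (g x t)
      (fun u w => ih (h x t u w))
    rw [funext fun v => hVt x t v ht]
    simpa using (isometry_add_right _).lipschitz.min
      (hQ.weaken (K' := 1) (by simpa using hγ1))

theorem upsilon_unique_fixed_point_general
    {W : Type*} [Fintype W] (p : W → ℝ)
    (hp : ∀ w, 0 ≤ p w) (hp1 : ∑ w, p w = 1)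
    {X : Type*} (ζ : X)
    {U : Type*} [Fintype U] [Nonempty U]
    (k : ℕ) (hk : 1 ≤ k)
    (γ : ℝ) (hγ0 : 0 ≤ γ) (hγ1 : γ < 1)
    (h : X → ℕ → U → W → X)
    (g : X → ℕ → U → W → ℝ)
    (s : X → ℕ → W → ℝ)
    (V : X → ℕ → ℝ → ℝ)
    (hVk : ∀ x v, V x k v = v + ∑ w, p w * s x k w)
    (hVt : ∀ x t v, t < k →
      V x t v = min (v + ∑ w, p w * s x t w)
        (Finset.univ.inf' Finset.univ_nonempty
          (fun u : U => ∑ w, p w * (g x t u w + γ * V (h x t u w) (t + 1) v))))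
    (Υ : ℝ → ℝ)
    (hΥ : ∀ v, Υ v = Finset.univ.inf' Finset.univ_nonempty
      (fun u : U => ∑ w, p w * (g ζ 0 u w + γ * V (h ζ 0 u w) 1 v)))
     :
    ∃! vbar : ℝ, Υ vbar = vbar := by
  have hV : ∀ x, LipschitzWith 1 (V x 1) :=
    lipschitzWith_one_of_finite_horizon_recursion hp hp1 hγ0 hγ1.le hVk hVt hk
  have hΥ_contracting : ContractingWith γ.toNNReal Υ := by
    refine ⟨Real.toNNReal_lt_one.2 hγ1, ?_⟩
    rw [funext hΥ]
    simpa using lipschitzWith_inf'_expected_cost hp hp1 hγ0 (g ζ 0) fun u w => hV (h ζ 0 u w)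
  exact ⟨_, hΥ_contracting.fixedPoint_isFixedPt, fun _ hv => hΥ_contracting.fixedPoint_unique hv⟩

/-- **Existence and uniqueness of the fixed point of `Υ`.** -/
theorem upsilon_unique_fixed_point
    {W : Type*} [Fintype W] [Nonempty W] (p : W → ℝ)
    (hp : ∀ w, 0 ≤ p w) (hp1 : ∑ w, p w = 1)
    {X : Type*} (ζ : X)
    {U : Type*} [Fintype U] [Nonempty U]
    (k : ℕ) (hk : 1 ≤ k)
    (γ : ℝ) (hγ0 : 0 ≤ γ) (hγ1 : γ < 1)
    (h : X → ℕ → U → W → X)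
    (g : X → ℕ → U → W → ℝ) (hg : ∀ x t u w, 0 ≤ g x t u w)
    (s : X → ℕ → W → ℝ) (hs : ∀ x t w, 0 ≤ s x t w)
    (hsζ : ∀ t w, s ζ t w = 0)
    (V : X → ℕ → ℝ → ℝ)
    (hVk : ∀ x v, V x k v = v + ∑ w, p w * s x k w)
    (hVt : ∀ x t v, t < k →
      V x t v = min (v + ∑ w, p w * s x t w)
        (Finset.univ.inf' Finset.univ_nonempty
          (fun u : U => ∑ w, p w * (g x t u w + γ * V (h x t u w) (t + 1) v))))
    (Υ : ℝ → ℝ)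
    (hΥ : ∀ v, Υ v = Finset.univ.inf' Finset.univ_nonempty
      (fun u : U => ∑ w, p w * (g ζ 0 u w + γ * V (h ζ 0 u w) 1 v)))
     :
    ∃! vbar : ℝ, Υ vbar = vbar :=
  upsilon_unique_fixed_point_general p hp hp1 ζ k hk γ hγ0 hγ1 h g s V hVk hVt Υ hΥ
end

section
/- Let v̄ ∈ ℝ satisfy Υ(v̄) = v̄ and define J(x,t) := V(x,t,v̄) for x ∈ X and t ∈ {0,…,k}. Then J satisfies the dynamic programming (Bellman) equations of the reset control problem: (i) J(ζ,0) = v̄ = min_{u∈U} E[ g(ζ,0,u,·) + γ·J(h(ζ,0,u,·), 1) ]; (ii) for every x ∈ X and every t with 0 ≤ t < k, J(x,t) = min{ J(ζ,0) + E[s(x,t,·)], min_{u∈U} E[ g(x,t,u,·) + γ·J(h(x,t,u,·), t+1) ] }; and (iii) for every x ∈ X, J(x,k) = J(ζ,0) + E[s(x,k,·)]. -/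
theorem fixed_point_satisfies_bellman_general
    {W : Type*} [Fintype W] (p : W → ℝ)
    {X : Type*} (ζ : X)
    {U : Type*} [Fintype U] [Nonempty U]
    (k : ℕ) (hk : 1 ≤ k)
    (γ : ℝ)
    (h : X → ℕ → U → W → X)
    (g : X → ℕ → U → W → ℝ)
    (s : X → ℕ → W → ℝ)
    (hsζ : ∀ t w, s ζ t w = 0)
    (V : X → ℕ → ℝ → ℝ)
    (hVk : ∀ x v, V x k v = v + ∑ w, p w * s x k w)
    (hVt : ∀ x t v, t < k →
      V x t v = min (v + ∑ w, p w * s x t w)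
        (Finset.univ.inf' Finset.univ_nonempty
          (fun u : U => ∑ w, p w * (g x t u w + γ * V (h x t u w) (t + 1) v))))
    (Υ : ℝ → ℝ)
    (hΥ : ∀ v, Υ v = Finset.univ.inf' Finset.univ_nonempty
      (fun u : U => ∑ w, p w * (g ζ 0 u w + γ * V (h ζ 0 u w) 1 v)))
    (vbar : ℝ) (hfix : Υ vbar = vbar) :
    (V ζ 0 vbar = vbar ∧
      vbar = Finset.univ.inf' Finset.univ_nonempty
        (fun u : U => ∑ w, p w * (g ζ 0 u w + γ * V (h ζ 0 u w) 1 vbar))) ∧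
    (∀ x : X, ∀ t < k,
      V x t vbar = min (V ζ 0 vbar + ∑ w, p w * s x t w)
        (Finset.univ.inf' Finset.univ_nonempty
          (fun u : U => ∑ w, p w * (g x t u w + γ * V (h x t u w) (t + 1) vbar)))) ∧
    (∀ x : X, V x k vbar = V ζ 0 vbar + ∑ w, p w * s x k w) := by
  have reset_cost_ζ : ∑ w, p w * s ζ 0 w = 0 := by
    simp only [hsζ, mul_zero, Finset.sum_const_zero]
  -- Resetting from `ζ` is free, so `V ζ 0 v = min v (Υ v)`, which the fixed point collapses to `vbar`.
  have value_ζ : V ζ 0 vbar = vbar := by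
    rw [hVt ζ 0 vbar hk, reset_cost_ζ, add_zero, ← hΥ, hfix, min_self]
  refine ⟨⟨value_ζ, ?_⟩, fun x t ht => ?_, fun x => ?_⟩
  · rw [← hΥ, hfix]
  · rw [hVt x t vbar ht, value_ζ]
  · rw [hVk x vbar, value_ζ]

/-- **Bellman equations.**  If `v̄` is a fixed point of `Υ` then `J(x,t) := V(x,t,v̄)`
satisfies the dynamic programming equations of the reset control problem. -/
theorem fixed_point_satisfies_bellman
    {W : Type*} [Fintype W] [Nonempty W] (p : W → ℝ)
    (hp : ∀ w, 0 ≤ p w) (hp1 : ∑ w, p w = 1)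
    {X : Type*} (ζ : X)
    {U : Type*} [Fintype U] [Nonempty U]
    (k : ℕ) (hk : 1 ≤ k)
    (γ : ℝ) (hγ0 : 0 ≤ γ) (hγ1 : γ < 1)
    (h : X → ℕ → U → W → X)
    (g : X → ℕ → U → W → ℝ) (hg : ∀ x t u w, 0 ≤ g x t u w)
    (s : X → ℕ → W → ℝ) (hs : ∀ x t w, 0 ≤ s x t w)
    (hsζ : ∀ t w, s ζ t w = 0)
    (V : X → ℕ → ℝ → ℝ)
    (hVk : ∀ x v, V x k v = v + ∑ w, p w * s x k w)
    (hVt : ∀ x t v, t < k →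
      V x t v = min (v + ∑ w, p w * s x t w)
        (Finset.univ.inf' Finset.univ_nonempty
          (fun u : U => ∑ w, p w * (g x t u w + γ * V (h x t u w) (t + 1) v))))
    (Υ : ℝ → ℝ)
    (hΥ : ∀ v, Υ v = Finset.univ.inf' Finset.univ_nonempty
      (fun u : U => ∑ w, p w * (g ζ 0 u w + γ * V (h ζ 0 u w) 1 v)))
    (vbar : ℝ) (hfix : Υ vbar = vbar) :
    (V ζ 0 vbar = vbar ∧
      vbar = Finset.univ.inf' Finset.univ_nonempty
        (fun u : U => ∑ w, p w * (g ζ 0 u w + γ * V (h ζ 0 u w) 1 vbar))) ∧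
    (∀ x : X, ∀ t < k,
      V x t vbar = min (V ζ 0 vbar + ∑ w, p w * s x t w)
        (Finset.univ.inf' Finset.univ_nonempty
          (fun u : U => ∑ w, p w * (g x t u w + γ * V (h x t u w) (t + 1) vbar)))) ∧
    (∀ x : X, V x k vbar = V ζ 0 vbar + ∑ w, p w * s x k w) :=
  fixed_point_satisfies_bellman_general p ζ k hk γ h g s hsζ V hVk hVt Υ hΥ vbar hfix
end

section
/- Any fixed point v̄ of Υ (i.e. Υ(v̄) = v̄) satisfies the upper bound v̄ ≤ (1/(1−γ)) · min_{u∈U} E_w[ g(ζ,0,u,w) + γ·E_{w′}[ s(h(ζ,0,u,w), 1, w′) ] ], where E_w and E_{w′} denote the expectation ∑ p(·)·(·) over independent copies of the noise. (This value is the upper endpoint J̄ of the initial binary-search bracket in the BiDS algorithm, so v̄ ∈ [0, J̄].) -/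
/-!
Resetting at time `1` is always admissible, so `V(x, 1, v) ≤ v + E[s(x, 1, ·)]`. Plugging this into
`Υ` gives `Υ(v) ≤ J + γ v` for every `v`, where `J` is the bracket value. At a fixed point this reads
`v̄ ≤ J + γ v̄`, i.e. `v̄ ≤ J / (1 - γ)` since `γ < 1`.
-/

open Finset

theorem sum_mul_add_const {W : Type*} [Fintype W] {p : W → ℝ} (hp1 : ∑ w, p w = 1)
    (f : W → ℝ) (c : ℝ) : ∑ w, p w * (f w + c) = ∑ w, p w * f w + c := by
  simp only [mul_add, sum_add_distrib, ← sum_mul, hp1, one_mul]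

theorem value_le_reset {X U W : Type*} [Fintype U] [Nonempty U] [Fintype W] (p : W → ℝ)
    (k : ℕ) (γ : ℝ) (h : X → ℕ → U → W → X) (g : X → ℕ → U → W → ℝ) (s : X → ℕ → W → ℝ)
    (V : X → ℕ → ℝ → ℝ)
    (hVk : ∀ x v, V x k v = v + ∑ w, p w * s x k w)
    (hVt : ∀ x t v, t < k →
      V x t v = min (v + ∑ w, p w * s x t w)
        (univ.inf' univ_nonempty
          (fun u : U => ∑ w, p w * (g x t u w + γ * V (h x t u w) (t + 1) v))))
    {t : ℕ} (ht : t ≤ k) (x : X) (v : ℝ) :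
    V x t v ≤ v + ∑ w, p w * s x t w := by
  rcases ht.eq_or_lt with rfl | ht
  · exact (hVk x v).le
  · exact (hVt x t v ht).trans_le (min_le_left _ _)

theorem expected_cost_le_of_le_reset {W : Type*} [Fintype W] {p : W → ℝ}
    (hp : ∀ w, 0 ≤ p w) (hp1 : ∑ w, p w = 1) {γ : ℝ} (hγ0 : 0 ≤ γ)
    (φ c V : W → ℝ) {v : ℝ} (hV : ∀ w, V w ≤ v + c w) :
    ∑ w, p w * (φ w + γ * V w) ≤ ∑ w, p w * (φ w + γ * c w) + γ * v := calc
  ∑ w, p w * (φ w + γ * V w) ≤ ∑ w, p w * ((φ w + γ * c w) + γ * v) := by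
    refine sum_le_sum fun w _ => mul_le_mul_of_nonneg_left ?_ (hp w)
    linarith [mul_le_mul_of_nonneg_left (hV w) hγ0]
  _ = ∑ w, p w * (φ w + γ * c w) + γ * v := sum_mul_add_const hp1 _ _

theorem le_one_div_sub_mul_of_le_add_mul {v J γ : ℝ} (hγ1 : γ < 1) (hv : v ≤ J + γ * v) :
    v ≤ 1 / (1 - γ) * J := by
  rw [one_div_mul_eq_div, le_div_iff₀ (by linarith)]
  linarith

theorem fixed_point_upper_bound_general
    {W : Type*} [Fintype W] (p : W → ℝ)
    (hp : ∀ w, 0 ≤ p w) (hp1 : ∑ w, p w = 1)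
    {X : Type*} (ζ : X)
    {U : Type*} [Fintype U] [Nonempty U]
    (k : ℕ) (hk : 1 ≤ k)
    (γ : ℝ) (hγ0 : 0 ≤ γ) (hγ1 : γ < 1)
    (h : X → ℕ → U → W → X)
    (g : X → ℕ → U → W → ℝ)
    (s : X → ℕ → W → ℝ)
    (V : X → ℕ → ℝ → ℝ)
    (hVk : ∀ x v, V x k v = v + ∑ w, p w * s x k w)
    (hVt : ∀ x t v, t < k →
      V x t v = min (v + ∑ w, p w * s x t w)
        (Finset.univ.inf' Finset.univ_nonempty
          (fun u : U => ∑ w, p w * (g x t u w + γ * V (h x t u w) (t + 1) v))))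
    (Υ : ℝ → ℝ)
    (hΥ : ∀ v, Υ v = Finset.univ.inf' Finset.univ_nonempty
      (fun u : U => ∑ w, p w * (g ζ 0 u w + γ * V (h ζ 0 u w) 1 v)))
    (vbar : ℝ) (hfix : Υ vbar = vbar) :
    vbar ≤ (1 / (1 - γ)) *
      Finset.univ.inf' Finset.univ_nonempty
        (fun u : U => ∑ w, p w *
          (g ζ 0 u w + γ * ∑ w', p w' * s (h ζ 0 u w) 1 w')) := by
  refine le_one_div_sub_mul_of_le_add_mul hγ1 ?_
  rw [← sub_le_iff_le_add]
  refine le_inf' _ _ fun u _ => sub_le_iff_le_add.mpr ?_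
  calc vbar = Υ vbar := hfix.symm
    _ ≤ ∑ w, p w * (g ζ 0 u w + γ * V (h ζ 0 u w) 1 vbar) := by
      rw [hΥ]; exact inf'_le _ (mem_univ u)
    _ ≤ _ := expected_cost_le_of_le_reset hp hp1 hγ0 _ _ _
      fun w => value_le_reset p k γ h g s V hVk hVt hk _ vbar

/-- **Upper bound on the fixed point.**  Any fixed point `v̄` of `Υ` satisfies
`v̄ ≤ (1/(1−γ)) · min_u E[ g(ζ,0,u,w) + γ·E[s(h(ζ,0,u,w),1,w′)] ]`, the upper
endpoint of the initial BiDS binary-search bracket. -/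
theorem fixed_point_upper_bound
    {W : Type*} [Fintype W] [Nonempty W] (p : W → ℝ)
    (hp : ∀ w, 0 ≤ p w) (hp1 : ∑ w, p w = 1)
    {X : Type*} (ζ : X)
    {U : Type*} [Fintype U] [Nonempty U]
    (k : ℕ) (hk : 1 ≤ k)
    (γ : ℝ) (hγ0 : 0 ≤ γ) (hγ1 : γ < 1)
    (h : X → ℕ → U → W → X)
    (g : X → ℕ → U → W → ℝ) (hg : ∀ x t u w, 0 ≤ g x t u w)
    (s : X → ℕ → W → ℝ) (hs : ∀ x t w, 0 ≤ s x t w)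
    (hsζ : ∀ t w, s ζ t w = 0)
    (V : X → ℕ → ℝ → ℝ)
    (hVk : ∀ x v, V x k v = v + ∑ w, p w * s x k w)
    (hVt : ∀ x t v, t < k →
      V x t v = min (v + ∑ w, p w * s x t w)
        (Finset.univ.inf' Finset.univ_nonempty
          (fun u : U => ∑ w, p w * (g x t u w + γ * V (h x t u w) (t + 1) v))))
    (Υ : ℝ → ℝ)
    (hΥ : ∀ v, Υ v = Finset.univ.inf' Finset.univ_nonempty
      (fun u : U => ∑ w, p w * (g ζ 0 u w + γ * V (h ζ 0 u w) 1 v)))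
    (vbar : ℝ) (hfix : Υ vbar = vbar) :
    vbar ≤ (1 / (1 - γ)) *
      Finset.univ.inf' Finset.univ_nonempty
        (fun u : U => ∑ w, p w *
          (g ζ 0 u w + γ * ∑ w', p w' * s (h ζ 0 u w) 1 w')) :=
  fixed_point_upper_bound_general p hp hp1 ζ k hk γ hγ0 hγ1 h g s V hVk hVt Υ hΥ vbar hfix
end
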